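/- arXiv:1006.2428 — 8 statements merged into one kernel-verified Lean document; each statement's English description precedes it below -/
import Mathlib

section
/- For each n ≥ 2 there are only finitely many tuples of positive integers (k₁, …, kₙ) with k₁ ≤ k₂ ≤ ⋯ ≤ kₙ and 1/k₁ + ⋯ + 1/kₙ = 1. -/
lemma egy_aux : ∀ (m : ℕ) (q : ℚ),
    {k : Fin m → ℕ | (∀ i, 0 < k i) ∧ Monotone k ∧ ∑ i, (1 : ℚ) / (k i) = q}.Finite := by
  intro m
  induction m with
  | zero => intro q; exact Set.toFinite _
  | succ m ih =>
    intro q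
    by_cases hq : 0 < q
    · set N := ⌈((m + 1 : ℚ)) / q⌉₊ with hN
      have hfin : (⋃ c ∈ Finset.Icc 1 N,
          {k : Fin m → ℕ | (∀ i, 0 < k i) ∧ Monotone k ∧
            ∑ i, (1 : ℚ) / (k i) = q - 1 / c}).Finite :=
        Set.Finite.biUnion (Finset.Icc 1 N).finite_toSet (fun c _ => ih _)
      have hprod := (Set.finite_Icc 1 N).prod hfin
      apply Set.Finite.of_finite_image (f := fun k => (k 0, fun i : Fin m => k i.succ))
      · apply Set.Finite.subset hprod
        rintro ⟨a, f⟩ ⟨k, ⟨hpos, hmono, hsum⟩, hk⟩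
        obtain ⟨ha, hf⟩ : a = k 0 ∧ f = fun i : Fin m => k i.succ := by
          simpa [Prod.ext_iff, eq_comm] using hk
        subst ha hf
        have hk0 : 1 ≤ k 0 := hpos 0
        have hk0pos : (0 : ℚ) < k 0 := by exact_mod_cast hpos 0
        have hle : ∀ i : Fin (m + 1), (1 : ℚ) / (k i) ≤ 1 / (k 0) := by
          intro i
          apply one_div_le_one_div_of_le hk0pos
          exact_mod_cast hmono (Fin.zero_le i)
        have hqle : q ≤ (m + 1) / (k 0) := by
          rw [← hsum]
          calc ∑ i, (1 : ℚ) / (k i) ≤ ∑ _i : Fin (m + 1), (1 : ℚ) / (k 0) :=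
                Finset.sum_le_sum fun i _ => hle i
            _ = (m + 1) / (k 0) := by
                rw [Finset.sum_const]
                simp [div_eq_mul_inv, mul_comm]
        have hkN : k 0 ≤ N := by
          have h1 : (k 0 : ℚ) ≤ (m + 1) / q := by
            rw [le_div_iff₀ hq]
            calc (k 0 : ℚ) * q ≤ (k 0) * ((m + 1) / (k 0)) :=
                  mul_le_mul_of_nonneg_left hqle hk0pos.le
              _ = m + 1 := by field_simp
          have h2 : ((m + 1 : ℚ)) / q ≤ N := Nat.le_ceil _
          exact_mod_cast h1.trans h2
        refine ⟨Set.mem_Icc.mpr ⟨hk0, hkN⟩, ?_⟩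
        apply Set.mem_biUnion (Finset.mem_Icc.mpr ⟨hk0, hkN⟩)
        refine ⟨fun i => hpos _, fun i j hij => hmono (Fin.succ_le_succ_iff.mpr hij), ?_⟩
        have hs := Fin.sum_univ_succ (fun i => (1 : ℚ) / (k i))
        rw [hsum] at hs
        have : ∑ i : Fin m, (1 : ℚ) / (k i.succ) = q - 1 / (k 0) := by linarith
        simpa using this
      · intro k1 _ k2 _ h
        simp only [Prod.mk.injEq] at h
        funext i
        rcases Fin.eq_zero_or_eq_succ i with h0 | ⟨j, rfl⟩
        · rw [h0]; exact h.1
        · exact congrFun h.2 j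
    · convert Set.finite_empty
      ext k
      simp only [Set.mem_setOf_eq, Set.mem_empty_iff_false, iff_false]
      rintro ⟨hpos, _, hsum⟩
      apply hq
      rw [← hsum]
      apply Finset.sum_pos
      · intro i _
        have : (0 : ℚ) < k i := by exact_mod_cast hpos i
        positivity
      · exact Finset.univ_nonempty

theorem egyptian_finite (n : ℕ) (hn : 2 ≤ n) :
    {k : Fin n → ℕ | (∀ i, 0 < k i) ∧ Monotone k ∧ ∑ i, (1 : ℚ) / (k i) = 1}.Finite :=
  egy_aux n 1
end

section
/- Let k₁, …, kₙ be positive integers with 1/k₁ + ⋯ + 1/kₙ = 1, let k = lcm(k₁,…,kₙ), and set wᵢ = k/kᵢ. Then for every real x, ⌊kx⌋ - Σᵢ ⌊wᵢ x⌋ ≥ 0. -/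
theorem floor_diff_nonneg (n : ℕ) (k : Fin n → ℕ) (hpos : ∀ i, 0 < k i)
    (hsum : ∑ i, (1 : ℚ) / (k i) = 1)
    (K : ℕ) (hK : K = Finset.univ.lcm k)
    (w : Fin n → ℕ) (hw : ∀ i, w i = K / k i) :
    ∀ x : ℝ, (0 : ℤ) ≤ ⌊(K : ℝ) * x⌋ - ∑ i, ⌊(w i : ℝ) * x⌋ := by
  have hdvd : ∀ i, k i ∣ K := by
    intro i; rw [hK]; exact Finset.dvd_lcm (Finset.mem_univ i)
  have hwk : ∀ i, w i * k i = K := by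
    intro i; rw [hw i, Nat.div_mul_cancel (hdvd i)]
  have hsumw : ∑ i, w i = K := by
    have : ((∑ i, w i : ℕ) : ℚ) = (K : ℚ) := by
      push_cast
      calc ∑ i, (w i : ℚ) = ∑ i, (K : ℚ) * (1 / (k i)) := by
            refine Finset.sum_congr rfl fun i _ => ?_
            have hk : (k i : ℚ) ≠ 0 := by exact_mod_cast (hpos i).ne'
            field_simp
            exact_mod_cast (hwk i)
        _ = (K : ℚ) := by rw [← Finset.mul_sum, hsum, mul_one]
    exact_mod_cast this
  intro x
  have hKx : (K : ℝ) * x = ∑ i, (w i : ℝ) * x := by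
    rw [← Finset.sum_mul, ← hsumw]; push_cast; ring
  rw [hKx, sub_nonneg]
  apply Int.le_floor.2
  push_cast
  exact Finset.sum_le_sum fun i _ => Int.floor_le _
end

section
/- Let k₁, …, kₙ be positive integers with 1/k₁ + ⋯ + 1/kₙ = 1, let k = lcm(k₁,…,kₙ), and wᵢ = k/kᵢ. Then for every integer j with 1 ≤ j ≤ k-1, one has Σᵢ ⌊wᵢ j / k⌋ < j. -/
theorem floor_sum_lt (n : ℕ) (k : Fin n → ℕ) (hpos : ∀ i, 0 < k i)
    (hsum : ∑ i, (1 : ℚ) / (k i) = 1)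
    (K : ℕ) (hK : K = Finset.univ.lcm k)
    (w : Fin n → ℕ) (hw : ∀ i, w i = K / k i) :
    ∀ j : ℕ, 1 ≤ j → j ≤ K - 1 → ∑ i, (w i * j) / K < j := by
  intro j hj1 hj2
  have hdvd : ∀ i, k i ∣ K := by
    intro i
    rw [hK]
    exact Finset.dvd_lcm (Finset.mem_univ i)
  have hwk : ∀ i, w i * k i = K := by
    intro i
    rw [hw i]
    exact Nat.div_mul_cancel (hdvd i)
  have hK0 : 0 < K := by
    rcases Nat.eq_zero_or_pos K with h | h
    · exfalso; omega
    · exact h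
  have hwpos : ∀ i, 0 < w i := by
    intro i
    have := hwk i
    by_contra h
    push_neg at h
    interval_cases (w i) <;> omega
  -- ∑ w i = K
  have hsumw : ∑ i, w i = K := by
    have : ((∑ i, w i : ℕ) : ℚ) = (K : ℚ) := by
      push_cast
      calc (∑ i, (w i : ℚ)) = ∑ i, (K : ℚ) * (1 / k i) := by
            refine Finset.sum_congr rfl fun i _ => ?_
            have hki : (k i : ℚ) ≠ 0 := by
              exact_mod_cast (hpos i).ne'
            have : (w i : ℚ) * (k i : ℚ) = (K : ℚ) := by
              exact_mod_cast congrArg (Nat.cast : ℕ → ℚ) (hwk i)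
            field_simp
            linarith [this]
        _ = (K : ℚ) * ∑ i, (1 / k i : ℚ) := by rw [Finset.mul_sum]
        _ = K := by rw [hsum, mul_one]
    exact_mod_cast this
  by_contra hle
  push_neg at hle
  -- j ≤ ∑ (w i * j) / K
  have key : K * j = K * (∑ i, (w i * j) / K) + ∑ i, (w i * j) % K := by
    have : ∑ i, w i * j = K * j := by
      rw [← Finset.sum_mul, hsumw]
    rw [← this, Finset.mul_sum, ← Finset.sum_add_distrib]
    refine Finset.sum_congr rfl fun i _ => ?_
    exact (Nat.div_add_mod (w i * j) K).symm
  have hrem0 : ∑ i, (w i * j) % K = 0 := by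
    have h1 : K * j ≤ K * (∑ i, (w i * j) / K) := Nat.mul_le_mul_left K hle
    omega
  have hall : ∀ i ∈ Finset.univ, (w i * j) % K = 0 :=
    (Finset.sum_eq_zero_iff).mp hrem0
  have hkidvd : ∀ i, k i ∣ j := by
    intro i
    have h := hall i (Finset.mem_univ i)
    have hKdvd : K ∣ w i * j := Nat.dvd_of_mod_eq_zero h
    rw [← hwk i] at hKdvd
    have := (mul_dvd_mul_iff_left (hwpos i).ne').mp hKdvd
    exact this
  have : K ∣ j := by
    rw [hK]
    exact Finset.lcm_dvd fun i _ => hkidvd i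
  have := Nat.le_of_dvd (by omega) this
  omega
end

section
/- Let k₁, …, kₙ be positive integers with 1/k₁ + ⋯ + 1/kₙ = 1, let k = lcm(k₁,…,kₙ), and wᵢ = k/kᵢ. Then for every real x with 1/k ≤ x < 1, ⌊kx⌋ - Σᵢ ⌊wᵢ x⌋ ≥ 1. -/
private lemma floor_div_nat_real (a : ℝ) (n : ℕ) (hn : 0 < n) :
    ⌊a / (n : ℝ)⌋ = ⌊a⌋ / (n : ℤ) := by
  have hn0 : (0:ℝ) < (n:ℝ) := by exact_mod_cast hn
  have hnZ : (0:ℤ) < (n:ℤ) := by exact_mod_cast hn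
  set q : ℤ := ⌊a⌋ / (n : ℤ) with hq
  rw [Int.floor_eq_iff]
  constructor
  · rw [le_div_iff₀ hn0]
    have h1 : q * (n:ℤ) ≤ ⌊a⌋ := Int.ediv_mul_le _ hnZ.ne'
    have h2 : ((q * (n:ℤ) : ℤ) : ℝ) ≤ ((⌊a⌋ : ℤ) : ℝ) := by exact_mod_cast h1
    have h3 : ((⌊a⌋ : ℤ) : ℝ) ≤ a := Int.floor_le a
    push_cast at h2 ⊢
    linarith
  · rw [div_lt_iff₀ hn0]
    have h1 : ⌊a⌋ < (q + 1) * (n:ℤ) := Int.lt_ediv_add_one_mul_self _ hnZ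
    have h2 : ⌊a⌋ + 1 ≤ (q + 1) * (n:ℤ) := h1
    have h3 : ((⌊a⌋:ℤ):ℝ) + 1 ≤ (((q + 1) * (n:ℤ) : ℤ) : ℝ) := by exact_mod_cast h2
    have h4 : a < ((⌊a⌋:ℤ):ℝ) + 1 := Int.lt_floor_add_one a
    push_cast at h3 ⊢
    linarith

theorem floor_diff_pos (n : ℕ) (k : Fin n → ℕ) (hpos : ∀ i, 0 < k i)
    (hsum : ∑ i, (1 : ℚ) / (k i) = 1)
    (K : ℕ) (hK : K = Finset.univ.lcm k)
    (w : Fin n → ℕ) (hw : ∀ i, w i = K / k i) :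
    ∀ x : ℝ, (1 : ℝ) / K ≤ x → x < 1 →
      (1 : ℤ) ≤ ⌊(K : ℝ) * x⌋ - ∑ i, ⌊(w i : ℝ) * x⌋ := by
  -- basic facts
  have hdvd : ∀ i, k i ∣ K := fun i => hK ▸ Finset.dvd_lcm (Finset.mem_univ i)
  have hK0 : 0 < K := by
    rcases Nat.eq_zero_or_pos K with h | h
    · exfalso
      have h0 : Finset.univ.lcm k = 0 := by rw [← hK]; exact h
      rw [Finset.lcm_eq_zero_iff] at h0
      obtain ⟨i, -, hi⟩ := h0
      exact absurd hi.symm (hpos i).ne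
    · exact h
  have hwk : ∀ i, w i * k i = K := fun i => by
    rw [hw i]; exact Nat.div_mul_cancel (hdvd i)
  have hwQ : ∀ i, (w i : ℚ) = (K : ℚ) / (k i : ℚ) := fun i => by
    have hki : ((k i : ℚ)) ≠ 0 := by exact_mod_cast (hpos i).ne'
    rw [eq_div_iff hki]
    exact_mod_cast hwk i
  have hsumw : ∑ i, w i = K := by
    have hq : ∑ i, (w i : ℚ) = (K : ℚ) := by
      rw [Finset.sum_congr rfl (fun i _ => hwQ i)]
      have : ∀ i ∈ Finset.univ, (K : ℚ) / (k i : ℚ) = (K:ℚ) * (1 / (k i : ℚ)) := by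
        intro i _; ring
      rw [Finset.sum_congr rfl this, ← Finset.mul_sum, hsum, mul_one]
    exact_mod_cast hq
  intro x hx1 hx2
  have hKR : (0:ℝ) < (K:ℝ) := by exact_mod_cast hK0
  set m := ⌊(K : ℝ) * x⌋ with hm
  have hm1 : 1 ≤ m := by
    apply Int.le_floor.mpr
    rw [div_le_iff₀ hKR] at hx1
    push_cast
    linarith
  have hmK : m < (K:ℤ) := by
    apply Int.floor_lt.mpr
    push_cast
    nlinarith
  have hfloor : ∀ i, ⌊(w i : ℝ) * x⌋ = m / (k i : ℤ) := by
    intro i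
    have hki : ((k i : ℝ)) ≠ 0 := by exact_mod_cast (hpos i).ne'
    have hx : (w i : ℝ) * x = ((K:ℝ) * x) / (k i : ℝ) := by
      rw [eq_div_iff hki, mul_right_comm]
      have : ((w i : ℝ)) * (k i : ℝ) = (K : ℝ) := by exact_mod_cast hwk i
      rw [this]
    rw [hx, floor_div_nat_real _ _ (hpos i)]
  rw [Finset.sum_congr rfl (fun i _ => hfloor i)]
  -- key inequality : ∑ m / k i ≤ m - 1
  have hmt : m = ((m.toNat : ℕ) : ℤ) := (Int.toNat_of_nonneg (by omega)).symm
  obtain ⟨i₀, hi₀⟩ : ∃ i, ¬ ((k i : ℤ) ∣ m) := by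
    by_contra h
    push_neg at h
    have hall : ∀ i ∈ Finset.univ, k i ∣ m.toNat := by
      intro i _
      have := h i
      rw [hmt] at this
      exact_mod_cast this
    have hKdvd : K ∣ m.toNat := hK ▸ Finset.lcm_dvd hall
    have : K ≤ m.toNat := Nat.le_of_dvd (by omega) hKdvd
    omega
  have key : ∑ i, m / (k i : ℤ) < m := by
    have hcast : ∀ i, ((m / (k i : ℤ) : ℤ) : ℚ) = ⌊(m : ℚ) / (k i : ℚ)⌋ := by
      intro i
      rw [Rat.floor_intCast_div_natCast]
    have hle : ∀ i ∈ Finset.univ, ((m / (k i : ℤ) : ℤ) : ℚ) ≤ (m : ℚ) * (w i : ℚ) / (K : ℚ) := by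
      intro i _
      have hval : (m : ℚ) * (w i : ℚ) / (K : ℚ) = (m : ℚ) / (k i : ℚ) := by
        rw [hwQ i]
        have hki : ((k i : ℚ)) ≠ 0 := by exact_mod_cast (hpos i).ne'
        have hKq : ((K : ℚ)) ≠ 0 := by exact_mod_cast hK0.ne'
        field_simp
      rw [hval, hcast i]
      exact Int.floor_le _
    have hlt : ((m / (k i₀ : ℤ) : ℤ) : ℚ) < (m : ℚ) * (w i₀ : ℚ) / (K : ℚ) := by
      have hval : (m : ℚ) * (w i₀ : ℚ) / (K : ℚ) = (m : ℚ) / (k i₀ : ℚ) := by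
        rw [hwQ i₀]
        have hki : ((k i₀ : ℚ)) ≠ 0 := by exact_mod_cast (hpos i₀).ne'
        have hKq : ((K : ℚ)) ≠ 0 := by exact_mod_cast hK0.ne'
        field_simp
      rw [hval, hcast i₀]
      refine lt_of_le_of_ne (Int.floor_le _) ?_
      intro hEq
      apply hi₀
      have : ((m / (k i₀ : ℤ) : ℤ) : ℚ) = (m : ℚ) / (k i₀ : ℚ) := by
        rw [hcast i₀, hEq]
      have hki : ((k i₀ : ℚ)) ≠ 0 := by exact_mod_cast (hpos i₀).ne'
      rw [eq_div_iff hki] at this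
      have : (m / (k i₀ : ℤ)) * (k i₀ : ℤ) = m := by exact_mod_cast this
      exact Dvd.intro_left _ this
    have hsumlt : ∑ i, ((m / (k i : ℤ) : ℤ) : ℚ) < ∑ i, (m : ℚ) * (w i : ℚ) / (K : ℚ) :=
      Finset.sum_lt_sum hle ⟨i₀, Finset.mem_univ i₀, hlt⟩
    have hsumval : ∑ i, (m : ℚ) * (w i : ℚ) / (K : ℚ) = (m : ℚ) := by
      have : ∀ i ∈ Finset.univ, (m : ℚ) * (w i : ℚ) / (K : ℚ)
          = ((m:ℚ)/(K:ℚ)) * (w i : ℚ) := by intro i _; ring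
      rw [Finset.sum_congr rfl this, ← Finset.mul_sum]
      have hs : ∑ i, (w i : ℚ) = (K : ℚ) := by exact_mod_cast hsumw
      rw [hs]
      have hKq : ((K : ℚ)) ≠ 0 := by exact_mod_cast hK0.ne'
      field_simp
    rw [hsumval] at hsumlt
    exact_mod_cast (by push_cast at hsumlt ⊢; exact hsumlt : ((∑ i, m / (k i : ℤ) : ℤ) : ℚ) < (m : ℚ))
  omega
end

section
/- The power series z·exp(Σ_{m≥1} (2m)!/(m!)² · zᵐ/m) equals 4z/(1+√(1-4z))², as formal power series (equivalently, as analytic functions for |z| < 1/4). -/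
/-!
The generating function of the central binomial coefficients is the binomial series
`∑ C(2n,n) zⁿ = (1 - 4z)^(-1/2)`, because `C(2n,n) = 4ⁿ · (1/2)(3/2)⋯(n - 1/2) / n!`.
Hence the exponent `G(z) = ∑_{m ≥ 1} C(2m,m) zᵐ/m` has derivative
`(1/√(1-4z) - 1)/z = 4/(√(1-4z)(1+√(1-4z)))`, which is also the derivative of
`log (4/(1+√(1-4z))²)`; both functions vanish at `0`, so they agree on `|z| < 1/4`.
-/

open Real Polynomial
open scoped Nat

section CharZeroField

variable {K : Type*} [Field K] [CharZero K]

theorem ascPochhammer_eval_half_mul_four_pow (n : ℕ) :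
    (ascPochhammer K n).eval (1 / 2) * 4 ^ n = n ! * Nat.centralBinom n := by
  induction n with
  | zero => simp
  | succ n ih =>
    have h : ((n + 1 : ℕ) : K) * Nat.centralBinom (n + 1)
        = 2 * (2 * n + 1) * Nat.centralBinom n := by
      exact_mod_cast Nat.succ_mul_centralBinom_succ n
    rw [ascPochhammer_succ_eval, Nat.factorial_succ, Nat.cast_mul]
    linear_combination (2 * (2 * (n : K) + 1)) * ih - (n ! : K) * h

theorem Ring.multichoose_half_mul_four_pow (n : ℕ) :
    Ring.multichoose (1 / 2 : K) n * 4 ^ n = Nat.centralBinom n := by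
  have h := Ring.factorial_nsmul_multichoose_eq_ascPochhammer (1 / 2 : K) n
  rw [ascPochhammer_smeval_eq_eval, nsmul_eq_mul] at h
  apply mul_left_cancel₀ (Nat.cast_ne_zero.mpr n.factorial_ne_zero : (n ! : K) ≠ 0)
  rw [← ascPochhammer_eval_half_mul_four_pow, ← h]
  ring

end CharZeroField

theorem hasSum_centralBinom_mul_pow {z : ℝ} (hz : |z| < 1 / 4) :
    HasSum (fun n ↦ (Nat.centralBinom n : ℝ) * z ^ n) (1 / √(1 - 4 * z)) := by
  have h4z : 4 * z ∈ Metric.eball (0 : ℝ) 1 := by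
    rw [← ENNReal.ofReal_one, Metric.eball_ofReal, mem_ball_zero_iff, norm_eq_abs, abs_mul,
      abs_of_pos four_pos]
    linarith
  have hterm (n : ℕ) :
      Ring.multichoose (1 / 2 : ℝ) n • (4 * z) ^ n = Nat.centralBinom n * z ^ n := by
    rw [mul_pow, ← Ring.multichoose_half_mul_four_pow, smul_eq_mul]
    ring
  simpa only [FormalMultilinearSeries.ofScalars_apply_eq, zero_add, ← Ring.multichoose_eq, hterm,
    ← sqrt_eq_rpow] using (one_div_one_sub_rpow_hasFPowerSeriesOnBall_zero (1 / 2)).hasSum h4z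

theorem hasSum_centralBinom_succ_mul_pow {z : ℝ} (hz : |z| < 1 / 4) :
    HasSum (fun n ↦ (Nat.centralBinom (n + 1) : ℝ) * z ^ n)
      (4 / (√(1 - 4 * z) * (1 + √(1 - 4 * z)))) := by
  rcases eq_or_ne z 0 with rfl | hz0
  · convert hasSum_single (f := fun n ↦ (Nat.centralBinom (n + 1) : ℝ) * 0 ^ n) 0
      (fun n hn ↦ by simp [hn]) using 1
    norm_num [Nat.centralBinom, Nat.choose]
  have hs : 0 < √(1 - 4 * z) := sqrt_pos.mpr (by linarith [abs_lt.mp hz])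
  have hsq : √(1 - 4 * z) ^ 2 = 1 - 4 * z := sq_sqrt (by linarith [abs_lt.mp hz])
  have htail := ((hasSum_nat_add_iff' 1).mpr (hasSum_centralBinom_mul_pow hz)).div_const z
  have hterm : (fun n ↦ (Nat.centralBinom (n + 1) : ℝ) * z ^ (n + 1) / z)
      = fun n ↦ (Nat.centralBinom (n + 1) : ℝ) * z ^ n := by
    funext n
    field_simp
    ring
  have hval : (1 / √(1 - 4 * z) - ∑ i ∈ Finset.range 1, (Nat.centralBinom i : ℝ) * z ^ i) / z
      = 4 / (√(1 - 4 * z) * (1 + √(1 - 4 * z))) := by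
    rw [Finset.sum_range_one, Nat.centralBinom_zero]
    field_simp
    linear_combination -hsq
  rw [hterm, hval] at htail
  exact htail

theorem hasDerivAt_tsum_mul_pow_succ_div {a : ℕ → ℝ} {r z : ℝ}
    (ha : Summable fun n ↦ |a n| * r ^ n) (hz : |z| < r) :
    HasDerivAt (fun x ↦ ∑' n : ℕ, a n * x ^ (n + 1) / (n + 1)) (∑' n : ℕ, a n * z ^ n) z := by
  have hr : 0 < r := (abs_nonneg z).trans_lt hz
  refine hasDerivAt_tsum_of_isPreconnected (g := fun n x ↦ a n * x ^ (n + 1) / (n + 1))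
    (g' := fun n x ↦ a n * x ^ n) ha Metric.isOpen_ball
    (convex_ball (0 : ℝ) r).isPreconnected (fun n y _ ↦ ?_) (fun n y hy ↦ ?_)
    (Metric.mem_ball_self hr) (by simp) (mem_ball_zero_iff.mpr hz)
  · refine (((hasDerivAt_pow (n + 1) y).const_mul (a n)).div_const ((n : ℝ) + 1)).congr_deriv ?_
    push_cast
    field_simp
  · have hy : |y| ≤ r := by simpa using (mem_ball_zero_iff.mp hy).le
    rw [norm_mul, norm_pow, norm_eq_abs, norm_eq_abs]
    gcongr

theorem hasDerivAt_tsum_centralBinom_succ_div {z : ℝ} (hz : |z| < 1 / 4) :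
    HasDerivAt (fun x ↦ ∑' m : ℕ, (Nat.centralBinom (m + 1) : ℝ) * x ^ (m + 1) / (m + 1))
      (4 / (√(1 - 4 * z) * (1 + √(1 - 4 * z)))) z := by
  obtain ⟨r, hzr, hr4⟩ := exists_between hz
  have hr : |r| < 1 / 4 := by rwa [abs_of_nonneg ((abs_nonneg z).trans hzr.le)]
  have hsummable : Summable fun n ↦ |(Nat.centralBinom (n + 1) : ℝ)| * r ^ n := by
    simpa only [Nat.abs_cast] using (hasSum_centralBinom_succ_mul_pow hr).summable
  rw [← (hasSum_centralBinom_succ_mul_pow hz).tsum_eq]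
  exact hasDerivAt_tsum_mul_pow_succ_div hsummable hzr

theorem hasDerivAt_log_four_div_one_add_sqrt_sq {z : ℝ} (hz : 4 * z < 1) :
    HasDerivAt (fun x ↦ log (4 / (1 + √(1 - 4 * x)) ^ 2))
      (4 / (√(1 - 4 * z) * (1 + √(1 - 4 * z)))) z := by
  have hs : 0 < √(1 - 4 * z) := sqrt_pos.mpr (by linarith)
  have hsqrt : HasDerivAt (fun x ↦ √(1 - 4 * x)) (-4 / (2 * √(1 - 4 * z))) z := by
    simpa using (((hasDerivAt_id z).const_mul 4).const_sub 1).sqrt (sub_pos.mpr hz).ne'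
  have := ((hasDerivAt_const z (4 : ℝ)).fun_div ((hsqrt.const_add 1).fun_pow 2)
    (by positivity)).log (by positivity)
  convert this using 1
  field_simp
  ring

theorem mahler_exp_closed_form (z : ℝ) (hz : |z| < 1 / 4) :
    z * Real.exp (∑' m : ℕ, (Nat.centralBinom (m + 1) : ℝ) * z ^ (m + 1) / (m + 1))
      = 4 * z / (1 + Real.sqrt (1 - 4 * z)) ^ 2 := by
  have hball {x : ℝ} : x ∈ Metric.ball 0 (1 / 4) ↔ |x| < 1 / 4 := by
    rw [mem_ball_zero_iff, norm_eq_abs]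
  have hG {x : ℝ} (hx : x ∈ Metric.ball 0 (1 / 4)) :=
    hasDerivAt_tsum_centralBinom_succ_div (hball.mp hx)
  have hH {x : ℝ} (hx : x ∈ Metric.ball 0 (1 / 4)) :=
    hasDerivAt_log_four_div_one_add_sqrt_sq (z := x) (by linarith [abs_lt.mp (hball.mp hx)])
  have hexponent := Metric.isOpen_ball.eqOn_of_deriv_eq (convex_ball 0 _).isPreconnected
    (fun x hx ↦ (hG hx).differentiableAt.differentiableWithinAt)
    (fun x hx ↦ (hH hx).differentiableAt.differentiableWithinAt)
    (fun x hx ↦ (hG hx).deriv.trans (hH hx).deriv.symm)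
    (Metric.mem_ball_self (by norm_num)) (by norm_num) (hball.mpr hz)
  beta_reduce at hexponent
  rw [hexponent, exp_log (by positivity)]
  ring
end

section
/- For every integer m ≥ 1, Σ_{a=1}^{m} (1/a)·C(2a,a)·C(2m-2a, m-a) = C(2m,m)·Σ_{k=1}^{m} (1/(k - 1/2) - 1/k). -/
open Finset

def Afun (m : ℕ) : ℚ :=
  ∑ a ∈ Finset.Icc 1 m,
    (1 / (a : ℚ)) * ((2 * a).choose a) * ((2 * m - 2 * a).choose (m - a))

def Sfun (m : ℕ) : ℚ := ∑ k ∈ Finset.Icc 1 m, (1 / ((k : ℚ) - 1 / 2) - 1 / k)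

def gfun (m a : ℕ) : ℚ :=
  (a : ℚ) * ((a : ℚ) - 1) * ((2 * a).choose a : ℚ) * ((2 * (m + 2 - a)).choose (m + 2 - a) : ℚ) /
    (((m : ℚ) + 1) * (2 * ((m + 2 - a : ℕ) : ℚ) - 1))

lemma cbq (n : ℕ) : ((n : ℚ) + 1) * ((2 * (n + 1)).choose (n + 1) : ℚ)
    = 2 * (2 * (n : ℚ) + 1) * ((2 * n).choose n : ℚ) := by
  have h := Nat.succ_mul_centralBinom_succ n
  simp only [Nat.centralBinom] at h
  exact_mod_cast h

lemma cbpos (n : ℕ) : (0 : ℚ) < ((2 * n).choose n : ℚ) := by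
  exact_mod_cast Nat.centralBinom_pos n

set_option maxHeartbeats 2000000 in
lemma ptwise (m a b : ℕ) (ha : 1 ≤ a) (hm : m = a + b) :
    ((m : ℚ) + 2) ^ 2 *
        ((1 / (a : ℚ)) * ((2 * a).choose a) * ((2 * (m + 2) - 2 * a).choose (m + 2 - a)))
      + 4 * (2 * (m : ℚ) + 1) ^ 2 *
        ((1 / (a : ℚ)) * ((2 * a).choose a) * ((2 * m - 2 * a).choose (m - a)))
      - (2 * (2 * (m : ℚ) + 3) * ((m : ℚ) + 2) + 2 * (2 * (m : ℚ) + 1) * ((m : ℚ) + 1)) *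
        ((1 / (a : ℚ)) * ((2 * a).choose a) * ((2 * (m + 1) - 2 * a).choose (m + 1 - a)))
      = gfun m (a + 1) - gfun m a := by
  subst hm
  have e1 : 2 * (a + b + 2) - 2 * a = 2 * (b + 2) := by omega
  have e2 : a + b + 2 - a = b + 2 := by omega
  have e3 : 2 * (a + b + 1) - 2 * a = 2 * (b + 1) := by omega
  have e4 : a + b + 1 - a = b + 1 := by omega
  have e5 : 2 * (a + b) - 2 * a = 2 * b := by omega
  have e6 : a + b - a = b := by omega
  have e7 : a + b + 2 - (a + 1) = b + 1 := by omega
  unfold gfun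
  rw [e1, e2, e3, e4, e5, e6, e7]
  have h1 := cbq a
  have h2 := cbq b
  have h3 := cbq (b + 1)
  have eb : b + 1 + 1 = b + 2 := by omega
  rw [eb] at h3
  have ha0 : (a : ℚ) ≠ 0 := by
    have : (1 : ℚ) ≤ (a : ℚ) := by exact_mod_cast ha
    linarith
  have ha1 : (a : ℚ) + 1 ≠ 0 := by positivity
  have hb1 : (b : ℚ) + 1 ≠ 0 := by positivity
  have hb2 : (b : ℚ) + 2 ≠ 0 := by positivity
  have hx1 : ((2 * (a + 1)).choose (a + 1) : ℚ)
      = 2 * (2 * (a : ℚ) + 1) * ((2 * a).choose a : ℚ) / ((a : ℚ) + 1) := by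
    field_simp; linarith [h1]
  have hy2 : ((2 * (b + 2)).choose (b + 2) : ℚ)
      = 2 * (2 * ((b : ℚ) + 1) + 1) * ((2 * (b + 1)).choose (b + 1) : ℚ) / ((b : ℚ) + 2) := by
    push_cast at h3
    field_simp; linarith [h3]
  have hy1 : ((2 * (b + 1)).choose (b + 1) : ℚ)
      = 2 * (2 * (b : ℚ) + 1) * ((2 * b).choose b : ℚ) / ((b : ℚ) + 1) := by
    field_simp; linarith [h2]
  rw [hx1, hy2, hy1]
  push_cast
  have hab1 : (a : ℚ) + (b : ℚ) + 1 ≠ 0 := by positivity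
  have h2b1 : 2 * (b : ℚ) + 1 ≠ 0 := by positivity
  have h2b3 : 2 * ((b : ℚ) + 1) + 1 ≠ 0 := by positivity
  have hden1 : 2 * ((b : ℚ) + 1) - 1 ≠ 0 := by
    intro h; nlinarith [Nat.cast_nonneg (α := ℚ) b]
  have hden2 : 2 * ((b : ℚ) + 2) - 1 ≠ 0 := by
    intro h; nlinarith [Nat.cast_nonneg (α := ℚ) b]
  field_simp
  ring

set_option maxHeartbeats 2000000 in
lemma recA (m : ℕ) :
    ((m : ℚ) + 2) ^ 2 * Afun (m + 2) + 4 * (2 * (m : ℚ) + 1) ^ 2 * Afun m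
      = (2 * (2 * (m : ℚ) + 3) * ((m : ℚ) + 2) + 2 * (2 * (m : ℚ) + 1) * ((m : ℚ) + 1))
          * Afun (m + 1) := by
  have key : ∑ a ∈ Finset.Icc 1 m,
      ( ((m : ℚ) + 2) ^ 2 *
          ((1 / (a : ℚ)) * ((2 * a).choose a) * ((2 * (m + 2) - 2 * a).choose (m + 2 - a)))
        + 4 * (2 * (m : ℚ) + 1) ^ 2 *
          ((1 / (a : ℚ)) * ((2 * a).choose a) * ((2 * m - 2 * a).choose (m - a)))
        - (2 * (2 * (m : ℚ) + 3) * ((m : ℚ) + 2) + 2 * (2 * (m : ℚ) + 1) * ((m : ℚ) + 1)) *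
          ((1 / (a : ℚ)) * ((2 * a).choose a) * ((2 * (m + 1) - 2 * a).choose (m + 1 - a))) )
      = gfun m (m + 1) - gfun m 1 := by
    rw [show Finset.Icc 1 m = Finset.Ico 1 (m + 1) from (Finset.Ico_add_one_right_eq_Icc 1 m).symm]
    rw [Finset.sum_Ico_eq_sum_range]
    simp only [show m + 1 - 1 = m from rfl]
    have tel := Finset.sum_range_sub (fun i => gfun m (i + 1)) m
    rw [show gfun m (m + 1) - gfun m 1 = (fun i => gfun m (i + 1)) m - (fun i => gfun m (i + 1)) 0
        from rfl, ← tel]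
    apply Finset.sum_congr rfl
    intro i hi
    have hi' : i < m := Finset.mem_range.mp hi
    have := ptwise m (1 + i) (m - 1 - i) (by omega) (by omega)
    simpa [show 1 + i + 1 = i + 1 + 1 from by omega, show 1 + i = i + 1 from by omega] using this
  unfold Afun
  rw [Finset.sum_Icc_succ_top (by omega : 1 ≤ m + 2), Finset.sum_Icc_succ_top (by omega : 1 ≤ m + 1),
      Finset.sum_Icc_succ_top (by omega : 1 ≤ m + 1)]
  have comb : ((m : ℚ) + 2) ^ 2 * (∑ a ∈ Finset.Icc 1 m,
        (1 / (a : ℚ)) * ((2 * a).choose a) * ((2 * (m + 2) - 2 * a).choose (m + 2 - a)))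
      + 4 * (2 * (m : ℚ) + 1) ^ 2 * (∑ a ∈ Finset.Icc 1 m,
        (1 / (a : ℚ)) * ((2 * a).choose a) * ((2 * m - 2 * a).choose (m - a)))
      - (2 * (2 * (m : ℚ) + 3) * ((m : ℚ) + 2) + 2 * (2 * (m : ℚ) + 1) * ((m : ℚ) + 1)) *
        (∑ a ∈ Finset.Icc 1 m,
        (1 / (a : ℚ)) * ((2 * a).choose a) * ((2 * (m + 1) - 2 * a).choose (m + 1 - a)))
      = gfun m (m + 1) - gfun m 1 := by
    rw [← key, Finset.mul_sum, Finset.mul_sum, Finset.mul_sum, ← Finset.sum_add_distrib,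
        ← Finset.sum_sub_distrib]
  -- boundary identity
  have e1 : 2 * (m + 2) - 2 * (m + 1) = 2 := by omega
  have e2 : m + 2 - (m + 1) = 1 := by omega
  have e3 : 2 * (m + 2) - 2 * (m + 2) = 0 := by omega
  have e4 : m + 2 - (m + 2) = 0 := by omega
  have e5 : 2 * (m + 1) - 2 * (m + 1) = 0 := by omega
  have e6 : m + 1 - (m + 1) = 0 := by omega
  have hm1 : (m : ℚ) + 1 ≠ 0 := by positivity
  have hm2 : (m : ℚ) + 2 ≠ 0 := by positivity
  have hg1 : gfun m 1 = 0 := by unfold gfun; norm_num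
  have hgm : gfun m (m + 1) = 2 * (m : ℚ) * ((2 * (m + 1)).choose (m + 1) : ℚ) := by
    unfold gfun
    rw [e2]
    push_cast
    norm_num [Nat.choose_one_right]
    field_simp
  rw [hg1, hgm] at comb
  have hcb := cbq (m + 1)
  rw [show m + 1 + 1 = m + 2 from rfl] at hcb
  push_cast at hcb
  have hc2 : ((2 * (m + 2)).choose (m + 2) : ℚ)
      = 2 * (2 * (m : ℚ) + 3) * ((2 * (m + 1)).choose (m + 1) : ℚ) / ((m : ℚ) + 2) := by
    field_simp
    linarith [hcb]
  have bd : ((m : ℚ) + 2) ^ 2 *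
        (1 / ((m : ℚ) + 1) * ((2 * (m + 1)).choose (m + 1) : ℚ) * 2
          + 1 / ((m : ℚ) + 2) * ((2 * (m + 2)).choose (m + 2) : ℚ) * 1)
        + 2 * (m : ℚ) * ((2 * (m + 1)).choose (m + 1) : ℚ)
      = (2 * (2 * (m : ℚ) + 3) * ((m : ℚ) + 2) + 2 * (2 * (m : ℚ) + 1) * ((m : ℚ) + 1)) *
        (1 / ((m : ℚ) + 1) * ((2 * (m + 1)).choose (m + 1) : ℚ) * 1) := by
    rw [hc2]
    field_simp
    ring
  rw [e1, e2, e3, e4, e5, e6]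
  simp only [Nat.choose_one_right, Nat.choose_self]
  push_cast
  linear_combination comb + bd

lemma recS (m : ℕ) : Sfun (m + 1) = Sfun m + (1 / (((m : ℚ) + 1) - 1 / 2) - 1 / ((m : ℚ) + 1)) := by
  unfold Sfun
  rw [Finset.sum_Icc_succ_top (by omega : 1 ≤ m + 1)]
  push_cast
  ring

lemma recR (m : ℕ) :
    ((m : ℚ) + 2) ^ 2 * (((2 * (m + 2)).choose (m + 2) : ℚ) * Sfun (m + 2))
        + 4 * (2 * (m : ℚ) + 1) ^ 2 * (((2 * m).choose m : ℚ) * Sfun m)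
      = (2 * (2 * (m : ℚ) + 3) * ((m : ℚ) + 2) + 2 * (2 * (m : ℚ) + 1) * ((m : ℚ) + 1))
          * (((2 * (m + 1)).choose (m + 1) : ℚ) * Sfun (m + 1)) := by
  have hm1 : (m : ℚ) + 1 ≠ 0 := by positivity
  have hm2 : (m : ℚ) + 2 ≠ 0 := by positivity
  have h2m1 : 2 * (m : ℚ) + 1 ≠ 0 := by positivity
  have h2m3 : 2 * (m : ℚ) + 3 ≠ 0 := by positivity
  have hcb1 := cbq m
  have hcb2 := cbq (m + 1)
  rw [show m + 1 + 1 = m + 2 from rfl] at hcb2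
  push_cast at hcb2
  have hc1 : ((2 * (m + 1)).choose (m + 1) : ℚ)
      = 2 * (2 * (m : ℚ) + 1) * ((2 * m).choose m : ℚ) / ((m : ℚ) + 1) := by
    field_simp; linarith [hcb1]
  have hc2 : ((2 * (m + 2)).choose (m + 2) : ℚ)
      = 2 * (2 * (m : ℚ) + 3) * ((2 * (m + 1)).choose (m + 1) : ℚ) / ((m : ℚ) + 2) := by
    field_simp; linarith [hcb2]
  have hd1 : (m : ℚ) + 1 - 1 / 2 ≠ 0 := by
    intro h; nlinarith [Nat.cast_nonneg (α := ℚ) m]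
  have hd2 : (m : ℚ) + 1 + 1 - 1 / 2 ≠ 0 := by
    intro h; nlinarith [Nat.cast_nonneg (α := ℚ) m]
  have h2m1' : 1 + (m : ℚ) * 2 ≠ 0 := by positivity
  have h2m3' : 3 + (m : ℚ) * 2 ≠ 0 := by positivity
  have hmul1 : ((m : ℚ) + 1) * (2 * (m : ℚ) + 1) ≠ 0 := mul_ne_zero hm1 h2m1
  have hmul2 : ((m : ℚ) + 2) * (2 * (m : ℚ) + 3) ≠ 0 := mul_ne_zero hm2 h2m3
  have hs1 : Sfun (m + 1) = Sfun m + 1 / (((m : ℚ) + 1) * (2 * (m : ℚ) + 1)) := by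
    rw [recS m]
    congr 1
    rw [div_sub_div _ _ hd1 hm1, div_eq_div_iff (mul_ne_zero hd1 hm1) hmul1]
    ring
  have hs2 : Sfun (m + 2) = Sfun (m + 1) + 1 / (((m : ℚ) + 2) * (2 * (m : ℚ) + 3)) := by
    have := recS (m + 1)
    push_cast at this
    rw [this]
    congr 1
    rw [div_sub_div _ _ hd2 (by positivity : (m : ℚ) + 1 + 1 ≠ 0),
        div_eq_div_iff (mul_ne_zero hd2 (by positivity : (m : ℚ) + 1 + 1 ≠ 0)) hmul2]
    ring
  rw [hs2, hs1, hc2, hc1]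
  field_simp
  ring

lemma main_aux : ∀ m : ℕ, Afun m = ((2 * m).choose m : ℚ) * Sfun m := by
  have base0 : Afun 0 = ((2 * 0).choose 0 : ℚ) * Sfun 0 := by simp [Afun, Sfun]
  have base1 : Afun 1 = ((2 * 1).choose 1 : ℚ) * Sfun 1 := by
    norm_num [Afun, Sfun, Nat.choose]
  have step : ∀ m : ℕ, Afun m = ((2 * m).choose m : ℚ) * Sfun m →
      Afun (m + 1) = ((2 * (m + 1)).choose (m + 1) : ℚ) * Sfun (m + 1) →
      Afun (m + 2) = ((2 * (m + 2)).choose (m + 2) : ℚ) * Sfun (m + 2) := by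
    intro m h0 h1
    have hA := recA m
    have hR := recR m
    rw [h0, h1] at hA
    have hne : ((m : ℚ) + 2) ^ 2 ≠ 0 := by positivity
    have := sub_eq_zero.mpr (hA.trans hR.symm)
    have key : ((m : ℚ) + 2) ^ 2 * (Afun (m + 2) - ((2 * (m + 2)).choose (m + 2) : ℚ) * Sfun (m + 2)) = 0 := by
      linarith [this]
    have := mul_eq_zero.mp key
    rcases this with h | h
    · exact absurd h hne
    · linarith [h]
  intro m
  induction m using Nat.twoStepInduction with
  | zero => exact base0
  | one => exact base1
  | more n ih1 ih2 => exact step n ih1 ih2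

theorem binom_sum_identity (m : ℕ) (hm : 1 ≤ m) :
    ∑ a ∈ Finset.Icc 1 m,
        (1 / (a : ℚ)) * ((2 * a).choose a) * ((2 * m - 2 * a).choose (m - a))
      = ((2 * m).choose m : ℚ) * ∑ k ∈ Finset.Icc 1 m, (1 / ((k : ℚ) - 1 / 2) - 1 / k) := by
  exact main_aux m
end

section
/- As formal power series, (Σ_{m≥1} C(2m,m) zᵐ/m) · (Σ_{m≥0} C(2m,m) zᵐ) = Σ_{m≥1} C(2m,m)·(Σ_{k=1}^{m}(1/(k-1/2) - 1/k))·zᵐ. -/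
/-!
`B = ∑ C(2m,m) Xᵐ` satisfies `(1 - 4X) B' = 2B`, so `(1 - 4X) B²` has derivative zero and equals
`1`, while `A = ∑ C(2m,m) Xᵐ / m` satisfies `X A' = B - 1`. The sums `h_m` increase by
`1/(m + 1/2) - 1/(m + 1)`, so the recurrence `(m + 1) C(2m+2,m+1) = (4m + 2) C(2m,m)` shows that
`H = ∑ C(2m,m) h_m Xᵐ` satisfies `(1 - 4X) H' - 2H = 4B - A'`. Together these give `A` and
`(1 - 4X) B H` the same derivative and constant term, so `A = (1 - 4X) B H` and
`A B = (1 - 4X) B² H = H`.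
-/

namespace PowerSeries

section CentralBinom

variable (R : Type*) [CommRing R]

noncomputable def centralBinomSeries : R⟦X⟧ := mk fun n => (n.centralBinom : R)

variable {R}

theorem derivative_one_sub_four_X : d⁄dX R (1 - 4 * X) = -4 := by
  simp [← map_ofNat C 4]

theorem coeff_one_sub_four_X_mul_derivative (f : R⟦X⟧) (n : ℕ) :
    coeff n ((1 - 4 * X) * d⁄dX R f) = coeff (n + 1) f * (n + 1) - 4 * (coeff n f * n) := by
  rw [← map_ofNat C 4, sub_mul, mul_assoc, map_sub, one_mul, coeff_C_mul, coeff_derivative]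
  cases n with
  | zero => simp
  | succ n => simp [coeff_derivative]

theorem one_sub_four_X_mul_derivative_centralBinomSeries :
    (1 - 4 * X) * d⁄dX R (centralBinomSeries R) = 2 * centralBinomSeries R := by
  ext n
  rw [coeff_one_sub_four_X_mul_derivative, ← map_ofNat C 2, coeff_C_mul]
  simp only [centralBinomSeries, coeff_mk]
  have h := congrArg (Nat.cast : ℕ → R) (Nat.succ_mul_centralBinom_succ n)
  push_cast at h
  linear_combination h

theorem one_sub_four_X_mul_centralBinomSeries_sq [IsAddTorsionFree R] :
    (1 - 4 * X) * centralBinomSeries R ^ 2 = 1 := by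
  apply derivative.ext
  · rw [Derivation.leibniz, Derivation.leibniz_pow, derivative_one_sub_four_X,
      Derivation.map_one_eq_zero]
    simp only [smul_eq_mul, nsmul_eq_mul]
    linear_combination
      2 * centralBinomSeries R * one_sub_four_X_mul_derivative_centralBinomSeries (R := R)
  · simp [centralBinomSeries]

end CentralBinom

section Harmonic

variable (K : Type*) [Field K] [CharZero K]

noncomputable def centralBinomDivSeries : K⟦X⟧ :=
  mk fun m => if m = 0 then 0 else (m.centralBinom : K) / m

noncomputable def centralBinomHarmonicSeries : K⟦X⟧ :=
  mk fun m => (m.centralBinom : K) * ∑ k ∈ Finset.Icc 1 m, (1 / ((k : K) - 1 / 2) - 1 / k)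

variable {K}

theorem X_mul_derivative_centralBinomDivSeries :
    X * d⁄dX K (centralBinomDivSeries K) = centralBinomSeries K - 1 := by
  ext n
  cases n with
  | zero => simp [centralBinomSeries]
  | succ n =>
    rw [coeff_succ_X_mul, coeff_derivative]
    simp only [centralBinomDivSeries, centralBinomSeries, coeff_mk, Nat.add_one_ne_zero,
      if_false, map_sub, coeff_one, Nat.cast_add, Nat.cast_one, sub_zero]
    field_simp

theorem one_sub_four_X_mul_derivative_centralBinomHarmonicSeries :
    (1 - 4 * X) * d⁄dX K (centralBinomHarmonicSeries K) - 2 * centralBinomHarmonicSeries K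
      = 4 * centralBinomSeries K - d⁄dX K (centralBinomDivSeries K) := by
  ext n
  rw [map_sub, coeff_one_sub_four_X_mul_derivative, ← map_ofNat C 2, coeff_C_mul, map_sub,
    ← map_ofNat C 4, coeff_C_mul, coeff_derivative]
  simp only [centralBinomHarmonicSeries, centralBinomDivSeries, centralBinomSeries, coeff_mk,
    Nat.add_one_ne_zero, if_false]
  rw [Finset.sum_Icc_succ_top (by omega)]
  set S := ∑ k ∈ Finset.Icc 1 n, (1 / ((k : K) - 1 / 2) - 1 / k)
  have h := congrArg (Nat.cast : ℕ → K) (Nat.succ_mul_centralBinom_succ n)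
  have hn : (n : K) + 1 ≠ 0 := by norm_cast
  have hn' : (2 * n + 1 : K) ≠ 0 := by norm_cast
  push_cast at h ⊢
  rw [div_mul_cancel₀ _ hn]
  have hδ : 2 * (2 * n + 1) * (n.centralBinom : K) * (1 / ((n : K) + 1 - 1 / 2) - 1 / (n + 1))
      = 4 * n.centralBinom - (n + 1).centralBinom := by
    rw [show (n : K) + 1 - 1 / 2 = (2 * n + 1) / 2 by ring, one_div_div]
    calc _ = 4 * n.centralBinom * ((2 * n + 1) / (2 * n + 1))
          - 2 * (2 * n + 1) * n.centralBinom / ((n : K) + 1) := by ring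
      _ = _ := by rw [div_self hn', mul_one, ← h, mul_div_cancel_left₀ _ hn]
  linear_combination (S + (1 / ((n : K) + 1 - 1 / 2) - 1 / (n + 1))) * h + hδ

theorem centralBinomDivSeries_mul_centralBinomSeries :
    centralBinomDivSeries K * centralBinomSeries K = centralBinomHarmonicSeries K := by
  set A := centralBinomDivSeries K
  set B := centralBinomSeries K
  set H := centralBinomHarmonicSeries K
  have hB : (1 - 4 * X) * B ^ 2 = 1 := one_sub_four_X_mul_centralBinomSeries_sq
  have hA : A = (1 - 4 * X) * B * H := by
    apply derivative.ext
    · apply mul_left_cancel₀ (X_ne_zero (R := K))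
      simp only [Derivation.leibniz, derivative_one_sub_four_X, smul_eq_mul]
      linear_combination (-X * H) * one_sub_four_X_mul_derivative_centralBinomSeries (R := K)
        - X * B * one_sub_four_X_mul_derivative_centralBinomHarmonicSeries (K := K)
        + (1 + B) * X_mul_derivative_centralBinomDivSeries (K := K) + hB
    · simp [A, B, H, centralBinomDivSeries, centralBinomHarmonicSeries]
  calc A * B = (1 - 4 * X) * B ^ 2 * H := by rw [hA]; ring
    _ = H := by rw [hB, one_mul]

end Harmonic

end PowerSeries

open PowerSeries in
theorem logQ_times_g0 :
    (PowerSeries.mk fun m : ℕ =>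
        if m = 0 then (0 : ℚ) else (Nat.centralBinom m : ℚ) / m) *
      (PowerSeries.mk fun m : ℕ => (Nat.centralBinom m : ℚ))
    = PowerSeries.mk fun m : ℕ =>
        (Nat.centralBinom m : ℚ) *
          ∑ k ∈ Finset.Icc 1 m, (1 / ((k : ℚ) - 1 / 2) - 1 / k) :=
  centralBinomDivSeries_mul_centralBinomSeries
end

section
/- For 0 < z < 1/4, Σ_{m≥1} C(2m,m)·(Σ_{k=1}^{m}(1/(k-1/2) - 1/k))·zᵐ = (1/√(1-4z))·log(4/(1+√(1-4z))²). -/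
/-!
Write `F x = ∑ C(2n,n) xⁿ`, `E x = ∑ C(2n+2,n+1) xⁿ` and `L x = ∑ C(2n,n) hₙ xⁿ`, where `hₙ` is
the inner sum of the statement. The recurrence `(n+1) C(2n+2,n+1) = (4n+2) C(2n,n)` turns into
the differential equation `(1-4x) F' = 2F`, so `F = 1/√(1-4x)`, and `F = 1 + x E` then gives
`E = 4/(√(1-4x)(1+√(1-4x)))`. Since `h_{n+1} - hₙ = 1/(n+1/2) - 1/(n+1)`, the coefficients of
`L` satisfy the same recurrence up to the inhomogeneous term `4 C(2n,n) - C(2n+2,n+1)`, whence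
`(1-4x) L' = 2L + 4F - E`. This makes `(L √(1-4x))' = E`, which is also the derivative of
`log (4/(1+√(1-4x))²)`, and both functions vanish at `0`.
-/

open Set

noncomputable section

def powSum (c : ℕ → ℝ) (x : ℝ) : ℝ := ∑' n, c n * x ^ n

def derivCoeff (c : ℕ → ℝ) : ℕ → ℝ := fun n => (n + 1) * c (n + 1)

theorem powSum_zero (c : ℕ → ℝ) : powSum c 0 = c 0 := by
  rw [powSum, tsum_eq_single 0 fun n hn => by simp [hn]]
  simp

section Radius

variable {c : ℕ → ℝ} {r C x : ℝ}

theorem summable_mul_pow_of_bound (hc : ∀ n, |c n| * r ^ n ≤ C) (hx : |x| < r) :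
    Summable fun n => c n * x ^ n := by
  have hr : 0 < r := (abs_nonneg x).trans_lt hx
  have hq : |x| / r < 1 := (div_lt_one hr).2 hx
  refine .of_norm_bounded ((summable_geometric_of_lt_one (by positivity) hq).mul_left C)
    fun n => ?_
  calc ‖c n * x ^ n‖ = |c n| * r ^ n * (|x| / r) ^ n := by
        rw [Real.norm_eq_abs, abs_mul, abs_pow, div_pow]
        field_simp
    _ ≤ C * (|x| / r) ^ n := by gcongr; exact hc n

theorem summable_abs_derivCoeff_mul_pow_of_bound (hc : ∀ n, |c n| * r ^ n ≤ C) {s : ℝ}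
    (hs0 : 0 ≤ s) (hs : s < r) : Summable fun n => |derivCoeff c n| * s ^ n := by
  have hr : 0 < r := hs0.trans_lt hs
  have hq : ‖s / r‖ < 1 := by
    rwa [Real.norm_eq_abs, abs_of_nonneg (by positivity), div_lt_one hr]
  have hgeom : Summable fun n : ℕ => ((n : ℝ) + 1) * (s / r) ^ n := by
    simpa [add_mul] using (summable_pow_mul_geometric_of_norm_lt_one 1 hq).add
      (summable_geometric_of_norm_lt_one hq)
  refine .of_nonneg_of_le (fun n => by positivity) (fun n => ?_) (hgeom.mul_left (C / r))
  have hcn : |c (n + 1)| ≤ C / r ^ (n + 1) := by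
    rw [le_div_iff₀ (by positivity)]
    exact hc (n + 1)
  calc |derivCoeff c n| * s ^ n = ((n : ℝ) + 1) * |c (n + 1)| * s ^ n := by
        rw [derivCoeff, abs_mul, abs_of_nonneg (by positivity)]
    _ ≤ ((n : ℝ) + 1) * (C / r ^ (n + 1)) * s ^ n := by gcongr
    _ = C / r * (((n : ℝ) + 1) * (s / r) ^ n) := by
        rw [div_pow, pow_succ]
        field_simp

theorem summable_derivCoeff_mul_pow_of_bound (hc : ∀ n, |c n| * r ^ n ≤ C) (hx : |x| < r) :
    Summable fun n => derivCoeff c n * x ^ n :=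
  .of_norm <| by
    simpa [Real.norm_eq_abs, abs_mul, abs_pow] using
      summable_abs_derivCoeff_mul_pow_of_bound hc (abs_nonneg x) hx

theorem hasDerivAt_powSum_of_bound (hc : ∀ n, |c n| * r ^ n ≤ C) (hx : |x| < r) :
    HasDerivAt (powSum c) (powSum (derivCoeff c) x) x := by
  obtain ⟨s, hxs, hsr⟩ := exists_between hx
  have hs0 : 0 ≤ s := (abs_nonneg x).trans hxs.le
  have hderiv := hasDerivAt_tsum_of_isPreconnected
    (g := fun n y => c (n + 1) * y ^ (n + 1)) (g' := fun n y => derivCoeff c n * y ^ n)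
    (summable_abs_derivCoeff_mul_pow_of_bound hc hs0 hsr) isOpen_Ioo isPreconnected_Ioo
    (fun n y _ => ((hasDerivAt_pow (n + 1) y).const_mul (c (n + 1))).congr_deriv <| by
      rw [derivCoeff, add_tsub_cancel_right]; push_cast; ring)
    (fun n y hy => by
      rw [Real.norm_eq_abs, abs_mul, abs_pow]
      gcongr
      exact (abs_lt.2 hy).le)
    (y₀ := 0) (by simp [(abs_nonneg x).trans_lt hxs]) (by simp) (abs_lt.1 hxs)
  refine (hderiv.const_add (c 0)).congr_of_eventuallyEq ?_
  filter_upwards [(isOpen_Ioo (a := -r) (b := r)).mem_nhds (abs_lt.1 hx)] with y hy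
  rw [powSum, tsum_eq_zero_add'
    ((summable_nat_add_iff 1).2 (summable_mul_pow_of_bound hc (abs_lt.2 hy)))]
  simp

end Radius

section Recurrence

variable {c : ℕ → ℝ} {x : ℝ}

theorem powSum_eq_add_mul_powSum_succ (hc : Summable fun n => c (n + 1) * x ^ n) :
    powSum c x = c 0 + x * powSum (fun n => c (n + 1)) x := by
  rw [powSum, powSum, tsum_eq_zero_add' ((hc.mul_left x).congr fun n => by ring),
    ← tsum_mul_left]
  simp only [pow_zero, mul_one, pow_succ]
  congr 1
  exact tsum_congr fun n => by ring

theorem one_sub_mul_mul_powSum_derivCoeff {d : ℕ → ℝ} {ρ β : ℝ}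
    (hrec : ∀ n, derivCoeff c n = (ρ * n + β) * c n + d n)
    (hc : Summable fun n => c n * x ^ n) (hc' : Summable fun n => derivCoeff c n * x ^ n) :
    (1 - ρ * x) * powSum (derivCoeff c) x = β * powSum c x + powSum d x := by
  have hshift : powSum (fun n => n * c n) x = x * powSum (derivCoeff c) x := by
    unfold derivCoeff at hc' ⊢
    simpa using powSum_eq_add_mul_powSum_succ (c := fun n => n * c n) (by simpa using hc')
  have hn : Summable fun n => n * c n * x ^ n :=
    (summable_nat_add_iff (f := fun n => n * c n * x ^ n) 1).1 <|
      (hc'.mul_left x).congr fun n => by simp only [derivCoeff, pow_succ]; push_cast; ring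
  have hd : powSum d x = powSum (derivCoeff c) x - ρ * powSum (fun n => n * c n) x
      - β * powSum c x := by
    simp only [powSum]
    rw [← tsum_mul_left, ← tsum_mul_left, ← hc'.tsum_sub (hn.mul_left ρ),
      ← (hc'.sub (hn.mul_left ρ)).tsum_sub (hc.mul_left β)]
    exact tsum_congr fun n => by rw [hrec n]; ring
  rw [hd, hshift]
  ring

end Recurrence

theorem eqOn_of_hasDerivAt_eq {𝕜 G : Type*} [RCLike 𝕜] [NormedAddCommGroup G]
    [NormedSpace 𝕜 G] {s : Set 𝕜} {f g f' : 𝕜 → G} (hs : IsOpen s) (hs' : IsPreconnected s)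
    (hf : ∀ x ∈ s, HasDerivAt f (f' x) x) (hg : ∀ x ∈ s, HasDerivAt g (f' x) x) {x₀ : 𝕜}
    (hx₀ : x₀ ∈ s) (h₀ : f x₀ = g x₀) : EqOn f g s :=
  hs.eqOn_of_deriv_eq hs' (fun x hx => (hf x hx).differentiableAt.differentiableWithinAt)
    (fun x hx => (hg x hx).differentiableAt.differentiableWithinAt)
    (fun x hx => (hf x hx).deriv.trans (hg x hx).deriv.symm) hx₀ h₀

def harmonicGap (n : ℕ) : ℝ := ∑ k ∈ Finset.Icc 1 n, (1 / ((k : ℝ) - 1 / 2) - 1 / k)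

theorem harmonicGap_succ (n : ℕ) :
    harmonicGap (n + 1) = harmonicGap n + (1 / ((n : ℝ) + 1 / 2) - 1 / ((n : ℝ) + 1)) := by
  rw [harmonicGap, Finset.sum_Icc_succ_top (by omega), harmonicGap]
  push_cast
  ring_nf

theorem harmonicGap_nonneg (n : ℕ) : 0 ≤ harmonicGap n := by
  refine Finset.sum_nonneg fun k hk => ?_
  have hk1 : (1 : ℝ) ≤ k := by exact_mod_cast (Finset.mem_Icc.1 hk).1
  rw [sub_nonneg]
  exact one_div_le_one_div_of_le (by linarith) (by linarith)

-- The terms are dominated by the telescoping differences `1 / (k - 1/2) - 1 / (k + 1/2)`.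
theorem harmonicGap_add_le_two (n : ℕ) : harmonicGap n + 1 / ((n : ℝ) + 1 / 2) ≤ 2 := by
  induction n with
  | zero => norm_num [harmonicGap]
  | succ n ih =>
    rw [harmonicGap_succ]
    push_cast
    have : 1 / ((n : ℝ) + 1 + 1 / 2) ≤ 1 / ((n : ℝ) + 1) :=
      one_div_le_one_div_of_le (by positivity) (by linarith)
    linarith

theorem harmonicGap_le_two (n : ℕ) : harmonicGap n ≤ 2 := by
  have : 0 < 1 / ((n : ℝ) + 1 / 2) := by positivity
  linarith [harmonicGap_add_le_two n]

theorem abs_centralBinom_mul_quarter_pow_le (n : ℕ) :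
    |(n.centralBinom : ℝ)| * (1 / 4) ^ n ≤ 1 := by
  rw [abs_of_nonneg (by positivity), one_div_pow, mul_one_div, div_le_one (by positivity)]
  exact_mod_cast Nat.centralBinom_le_four_pow n

theorem abs_centralBinom_succ_mul_quarter_pow_le (n : ℕ) :
    |((n + 1).centralBinom : ℝ)| * (1 / 4) ^ n ≤ 4 := by
  have := abs_centralBinom_mul_quarter_pow_le (n + 1)
  rw [pow_succ] at this
  linarith

theorem abs_centralBinom_mul_harmonicGap_mul_quarter_pow_le (n : ℕ) :
    |(n.centralBinom : ℝ) * harmonicGap n| * (1 / 4) ^ n ≤ 2 := by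
  rw [abs_mul, abs_of_nonneg (harmonicGap_nonneg n), mul_right_comm]
  nlinarith [abs_centralBinom_mul_quarter_pow_le n, harmonicGap_nonneg n, harmonicGap_le_two n,
    (by positivity : 0 ≤ |(n.centralBinom : ℝ)| * (1 / 4) ^ n)]

theorem derivCoeff_centralBinom (n : ℕ) :
    derivCoeff (fun n => (n.centralBinom : ℝ)) n = (4 * n + 2) * n.centralBinom := by
  have h : ((n + 1 : ℕ) : ℝ) * (n + 1).centralBinom
      = ((2 * (2 * n + 1) : ℕ) : ℝ) * n.centralBinom := by
    exact_mod_cast Nat.succ_mul_centralBinom_succ n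
  simp only [derivCoeff]
  push_cast at h
  linarith

theorem derivCoeff_centralBinom_mul_harmonicGap (n : ℕ) :
    derivCoeff (fun n => n.centralBinom * harmonicGap n) n
      = (4 * n + 2) * (n.centralBinom * harmonicGap n)
        + (4 * n.centralBinom - (n + 1).centralBinom) := by
  have hrec := derivCoeff_centralBinom n
  simp only [derivCoeff] at hrec ⊢
  have hn : (n : ℝ) + 1 ≠ 0 := by positivity
  have hn' : (n : ℝ) + 1 / 2 ≠ 0 := by positivity
  have hsucc : ((n + 1).centralBinom : ℝ) = (4 * n + 2) * n.centralBinom / (n + 1) := by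
    rw [← hrec]
    field_simp
  rw [harmonicGap_succ, hsucc]
  field_simp
  ring

section ClosedForms

variable {x : ℝ}

theorem sqrt_one_sub_four_mul_pos (hx : x < 1 / 4) : 0 < √(1 - 4 * x) :=
  Real.sqrt_pos.2 (by linarith)

theorem sq_sqrt_one_sub_four_mul (hx : x ≤ 1 / 4) : √(1 - 4 * x) ^ 2 = 1 - 4 * x :=
  Real.sq_sqrt (by linarith)

theorem hasDerivAt_sqrt_one_sub_four_mul (hx : x < 1 / 4) :
    HasDerivAt (fun y => √(1 - 4 * y)) (-2 / √(1 - 4 * x)) x := by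
  refine (((hasDerivAt_id' x).const_mul 4).const_sub 1).sqrt (by linarith) |>.congr_deriv ?_
  have := sqrt_one_sub_four_mul_pos hx
  field_simp
  ring

theorem one_sub_four_mul_mul_powSum_derivCoeff_centralBinom (hx : |x| < 1 / 4) :
    (1 - 4 * x) * powSum (derivCoeff fun n => (n.centralBinom : ℝ)) x
      = 2 * powSum (fun n => (n.centralBinom : ℝ)) x := by
  simpa [powSum] using one_sub_mul_mul_powSum_derivCoeff (d := 0) (ρ := 4) (β := 2)
    (fun n => by rw [derivCoeff_centralBinom]; simp)
    (summable_mul_pow_of_bound abs_centralBinom_mul_quarter_pow_le hx)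
    (summable_derivCoeff_mul_pow_of_bound abs_centralBinom_mul_quarter_pow_le hx)

theorem powSum_centralBinom (hx : |x| < 1 / 4) :
    powSum (fun n => (n.centralBinom : ℝ)) x = 1 / √(1 - 4 * x) := by
  have hconst : EqOn (fun y => powSum (fun n => (n.centralBinom : ℝ)) y * √(1 - 4 * y))
      (fun _ => 1) (Ioo (-(1 / 4)) (1 / 4)) := by
    refine eqOn_of_hasDerivAt_eq (f' := fun _ => 0) (x₀ := 0) isOpen_Ioo isPreconnected_Ioo
      (fun y hy => ?_) (fun y _ => hasDerivAt_const y 1) (by norm_num) (by simp [powSum_zero])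
    have hs := sqrt_one_sub_four_mul_pos hy.2
    refine ((hasDerivAt_powSum_of_bound abs_centralBinom_mul_quarter_pow_le (abs_lt.2 hy)).mul
      (hasDerivAt_sqrt_one_sub_four_mul hy.2)).congr_deriv ?_
    field_simp
    linear_combination one_sub_four_mul_mul_powSum_derivCoeff_centralBinom (abs_lt.2 hy) +
      powSum (derivCoeff fun n => (n.centralBinom : ℝ)) y * sq_sqrt_one_sub_four_mul hy.2.le
  exact (eq_div_iff (sqrt_one_sub_four_mul_pos (abs_lt.1 hx).2).ne').2 (hconst (abs_lt.1 hx))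

theorem powSum_centralBinom_succ (hx : |x| < 1 / 4) :
    powSum (fun n => ((n + 1).centralBinom : ℝ)) x
      = 4 / (√(1 - 4 * x) * (1 + √(1 - 4 * x))) := by
  rcases eq_or_ne x 0 with rfl | hx0
  · rw [powSum_zero, Nat.centralBinom_eq_two_mul_choose]
    norm_num
  have h := powSum_eq_add_mul_powSum_succ (c := fun n => (n.centralBinom : ℝ))
    (summable_mul_pow_of_bound abs_centralBinom_succ_mul_quarter_pow_le hx)
  rw [powSum_centralBinom hx, Nat.centralBinom_zero, Nat.cast_one] at h
  have hs := sqrt_one_sub_four_mul_pos (abs_lt.1 hx).2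
  rw [eq_div_iff (by positivity)]
  refine mul_left_cancel₀ hx0 ?_
  field_simp at h
  linear_combination -(1 + √(1 - 4 * x)) * h - sq_sqrt_one_sub_four_mul (abs_lt.1 hx).2.le

theorem powSum_four_mul_centralBinom_sub_succ (hx : |x| < 1 / 4) :
    powSum (fun n => 4 * (n.centralBinom : ℝ) - (n + 1).centralBinom) x
      = 4 / (1 + √(1 - 4 * x)) := by
  have hcb := summable_mul_pow_of_bound abs_centralBinom_mul_quarter_pow_le hx
  have hcb' := summable_mul_pow_of_bound abs_centralBinom_succ_mul_quarter_pow_le hx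
  have hs := sqrt_one_sub_four_mul_pos (abs_lt.1 hx).2
  calc _ = 4 * powSum (fun n => (n.centralBinom : ℝ)) x
        - powSum (fun n => ((n + 1).centralBinom : ℝ)) x := by
        simp only [powSum]
        rw [← tsum_mul_left, ← (hcb.mul_left 4).tsum_sub hcb']
        exact tsum_congr fun n => by ring
    _ = 4 / (1 + √(1 - 4 * x)) := by
        rw [powSum_centralBinom hx, powSum_centralBinom_succ hx]
        field_simp
        ring

theorem one_sub_four_mul_mul_powSum_derivCoeff_centralBinom_mul_harmonicGap (hx : |x| < 1 / 4) :
    (1 - 4 * x) * powSum (derivCoeff fun n => n.centralBinom * harmonicGap n) x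
      = 2 * powSum (fun n => n.centralBinom * harmonicGap n) x + 4 / (1 + √(1 - 4 * x)) := by
  rw [← powSum_four_mul_centralBinom_sub_succ hx]
  exact one_sub_mul_mul_powSum_derivCoeff (ρ := 4) (β := 2)
    derivCoeff_centralBinom_mul_harmonicGap
    (summable_mul_pow_of_bound abs_centralBinom_mul_harmonicGap_mul_quarter_pow_le hx)
    (summable_derivCoeff_mul_pow_of_bound abs_centralBinom_mul_harmonicGap_mul_quarter_pow_le hx)

theorem powSum_centralBinom_mul_harmonicGap (hx : |x| < 1 / 4) :
    powSum (fun n => n.centralBinom * harmonicGap n) x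
      = 1 / √(1 - 4 * x) * Real.log (4 / (1 + √(1 - 4 * x)) ^ 2) := by
  have hsol : EqOn (fun y => powSum (fun n => n.centralBinom * harmonicGap n) y * √(1 - 4 * y))
      (fun y => Real.log 4 - 2 * Real.log (1 + √(1 - 4 * y))) (Ioo (-(1 / 4)) (1 / 4)) := by
    refine eqOn_of_hasDerivAt_eq (f' := fun y => 4 / (√(1 - 4 * y) * (1 + √(1 - 4 * y))))
      (x₀ := 0) isOpen_Ioo isPreconnected_Ioo (fun y hy => ?_) (fun y hy => ?_) (by norm_num) ?_
    · have hs := sqrt_one_sub_four_mul_pos hy.2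
      refine ((hasDerivAt_powSum_of_bound abs_centralBinom_mul_harmonicGap_mul_quarter_pow_le
        (abs_lt.2 hy)).mul (hasDerivAt_sqrt_one_sub_four_mul hy.2)).congr_deriv ?_
      have h := one_sub_four_mul_mul_powSum_derivCoeff_centralBinom_mul_harmonicGap (abs_lt.2 hy)
      field_simp at h ⊢
      linear_combination h + (1 + √(1 - 4 * y)) *
        powSum (derivCoeff fun n => n.centralBinom * harmonicGap n) y *
          sq_sqrt_one_sub_four_mul hy.2.le
    · have hs := sqrt_one_sub_four_mul_pos hy.2
      refine ((hasDerivAt_const y (Real.log 4)).sub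
        ((((hasDerivAt_sqrt_one_sub_four_mul hy.2).const_add 1).log
          (by positivity)).const_mul 2)).congr_deriv ?_
      field_simp
      ring
    · have hlog4 : Real.log 4 = 2 * Real.log 2 := by
        rw [show (4 : ℝ) = 2 ^ 2 by norm_num, Real.log_pow, Nat.cast_ofNat]
      norm_num [powSum_zero, harmonicGap, hlog4]
  have hs := sqrt_one_sub_four_mul_pos (abs_lt.1 hx).2
  have h : _ = _ := hsol (abs_lt.1 hx)
  rw [Real.log_div (by norm_num) (by positivity), Real.log_pow, Nat.cast_ofNat]
  field_simp
  linarith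

end ClosedForms

end

theorem log_series_identity (z : ℝ) (hz0 : 0 < z) (hz : z < 1 / 4) :
    ∑' m : ℕ, (Nat.centralBinom (m + 1) : ℝ) *
        (∑ k ∈ Finset.Icc 1 (m + 1), (1 / ((k : ℝ) - 1 / 2) - 1 / k)) * z ^ (m + 1)
      = (1 / Real.sqrt (1 - 4 * z)) *
        Real.log (4 / (1 + Real.sqrt (1 - 4 * z)) ^ 2) := by
  rw [← powSum_centralBinom_mul_harmonicGap (abs_lt.2 ⟨by linarith, hz⟩), powSum]
  -- the `n = 0` term vanishes since `harmonicGap 0 = 0`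
  refine (add_left_injective 1).tsum_eq (α := ℝ)
    (f := fun n => (n.centralBinom : ℝ) * harmonicGap n * z ^ n) fun n hn => ⟨n - 1, ?_⟩
  refine Nat.sub_add_cancel (Nat.pos_of_ne_zero fun h0 => hn ?_)
  simp [h0, harmonicGap]
end
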